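/- Let n ≥ 1 and let T : ℝⁿ → ℝⁿ be monotone and additively homogeneous. Then the following are equivalent: (a) there is no pair (I, J) of disjoint subsets of {1,…,n} such that I is a MIN-dominion for T and J is a MAX-dominion for T; (b) for every monotone additively homogeneous map G : ℝⁿ → ℝⁿ with sup_{x ∈ ℝⁿ} ‖G(x) − T(x)‖_H < ∞, there exists λ ∈ ℝ such that for every x ∈ ℝⁿ and every i ∈ {1,…,n}, the sequence k ↦ [G^k(x)]_i / k converges to λ as k → ∞, where G^k denotes the k-fold iterate of G. -/

import Mathlib

/-- `T` is additively homogeneous: `T(x + c·e) = T(x) + c·e`. -/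
def AddHomog (n : ℕ) (T : (Fin n → ℝ) → (Fin n → ℝ)) : Prop :=
  ∀ (x : Fin n → ℝ) (c : ℝ), T (fun i => x i + c) = fun i => T x i + c

/-- `Δ` is a MIN-dominion for `T`: there is `β` with `T_i(t·e_{Δᶜ}) ≤ β`
for all `i ∈ Δ` and all `t ≥ 0`. -/
def MinDominion (n : ℕ) (T : (Fin n → ℝ) → (Fin n → ℝ)) (Δ : Set (Fin n)) : Prop :=
  Δ.Nonempty ∧ ∃ β : ℝ, ∀ i ∈ Δ, ∀ t : ℝ, 0 ≤ t →
    T (Δᶜ.indicator fun _ => t) i ≤ β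

/-- `Δ` is a MAX-dominion for `T`: there is `α` with `T_i(−t·e_{Δᶜ}) ≥ α`
for all `i ∈ Δ` and all `t ≥ 0`. -/
def MaxDominion (n : ℕ) (T : (Fin n → ℝ) → (Fin n → ℝ)) (Δ : Set (Fin n)) : Prop :=
  Δ.Nonempty ∧ ∃ α : ℝ, ∀ i ∈ Δ, ∀ t : ℝ, 0 ≤ t →
    α ≤ T (Δᶜ.indicator fun _ => -t) i

/-- Hilbert's seminorm `‖x‖_H = max_i x_i − min_i x_i`. -/
noncomputable def hilbertSeminorm (n : ℕ) (x : Fin n → ℝ) : ℝ :=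
  (⨆ i, x i) - ⨅ i, x i

/-- The additive slice space `A_α^β(T) = {x : α·e + x ≤ T(x) ≤ β·e + x}`. -/
def addSliceSpace (n : ℕ) (T : (Fin n → ℝ) → (Fin n → ℝ)) (α β : ℝ) : Set (Fin n → ℝ) :=
  {x | ∀ i, α + x i ≤ T x i ∧ T x i ≤ β + x i}

/-!
If there is no disjoint pair of a MIN- and a MAX-dominion, every additive slice space
`{x | α + x ≤ T x ≤ β + x}` is bounded in Hilbert's seminorm. Otherwise take an ultrafilter along
which the seminorm of slice points tends to infinity: the coordinates staying within bounded
distance of the minimum form a MIN-dominion, those staying within bounded distance of the maximum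
form a MAX-dominion (the same argument applied to `x ↦ -T (-x)`), and the two are disjoint. The
orbit of `0` under a uniform perturbation `G` has bounded steps, hence lies in one slice space, so
it has bounded spread; then `k ↦ G^k(0)_i` is subadditive up to a constant, Fekete's lemma gives
the limit, and sup-norm nonexpansiveness carries it to every starting point.

Conversely, from disjoint dominions `I`, `J` with bounds `β`, `α`, lowering `T` by `d` on `I` and
raising it by `d` on `J` caps the growth rate of `G^k(0)` by `β - d` on `I` and bounds it below by
`α + d` on `J`; for `2d > β - α` these rates cannot agree.
-/

open Filter Topology

variable {n : ℕ} {T : (Fin n → ℝ) → (Fin n → ℝ)}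

theorem abs_sub_le_dist {ι : Type*} [Fintype ι] (x y : ι → ℝ) (i : ι) : |x i - y i| ≤ dist x y :=
  Real.dist_eq (x i) (y i) ▸ dist_le_pi_dist x y i

theorem AddHomog.apply_le_add (hhom : AddHomog n T) (hmono : Monotone T) {u v : Fin n → ℝ}
    {c : ℝ} (h : ∀ j, u j ≤ v j + c) (i : Fin n) : T u i ≤ T v i + c := by
  have := hmono (show u ≤ fun j => v j + c from h) i
  rwa [hhom v c] at this

theorem AddHomog.iterate (hhom : AddHomog n T) (k : ℕ) : AddHomog n T^[k] := by
  induction k with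
  | zero => intro x c; rfl
  | succ k ih =>
    intro x c
    rw [Function.iterate_succ_apply, Function.iterate_succ_apply, hhom, ih]

theorem AddHomog.lipschitzWith_one (hhom : AddHomog n T) (hmono : Monotone T) :
    LipschitzWith 1 T := by
  refine LipschitzWith.of_dist_le_mul fun x y => ?_
  rw [NNReal.coe_one, one_mul, dist_pi_le_iff dist_nonneg]
  intro i
  have hxy := abs_sub_le_dist x y
  have h₁ := hhom.apply_le_add hmono (u := x) (v := y) (fun j => by linarith [abs_le.1 (hxy j)]) i
  have h₂ := hhom.apply_le_add hmono (u := y) (v := x) (fun j => by linarith [abs_le.1 (hxy j)]) i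
  rw [Real.dist_eq, abs_le]
  constructor <;> linarith

theorem AddHomog.abs_apply_sub_le_dist (hhom : AddHomog n T) (hmono : Monotone T)
    (x y : Fin n → ℝ) (i : Fin n) : |T x i - T y i| ≤ dist x y :=
  (abs_sub_le_dist _ _ i).trans <|
    ((hhom.lipschitzWith_one hmono).dist_le_mul x y).trans_eq (by simp)

theorem LipschitzWith.dist_iterate_self_le {X : Type*} [PseudoMetricSpace X] {f : X → X}
    (hf : LipschitzWith 1 f) (x : X) (k : ℕ) : dist (f^[k] x) x ≤ k * dist (f x) x := by
  have := dist_le_range_sum_of_dist_le (f := fun j => f^[j] x) k (d := fun _ => dist (f x) x)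
    fun {j} _ => by simpa [dist_comm] using hf.dist_iterate_succ_le_geometric x j
  simpa [dist_comm] using this

theorem AddHomog.add_const (hhom : AddHomog n T) (δ : Fin n → ℝ) :
    AddHomog n fun x => T x + δ := by
  intro x c
  funext i
  simp only [Pi.add_apply, hhom x c]
  ring

def negConj (T : (Fin n → ℝ) → (Fin n → ℝ)) : (Fin n → ℝ) → (Fin n → ℝ) :=
  fun x => -T (-x)

theorem Monotone.negConj (hmono : Monotone T) : Monotone (negConj T) :=
  fun _ _ hxy => neg_le_neg (hmono (neg_le_neg hxy))

theorem AddHomog.negConj (hhom : AddHomog n T) : AddHomog n (negConj T) := by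
  intro x c
  have : -(fun i => x i + c) = fun i => (-x) i + -c := by funext i; simp; ring
  show -T (-(fun i => x i + c)) = fun i => -T (-x) i + c
  rw [this, hhom]
  funext i
  simp only [Pi.neg_apply]
  ring

theorem iterate_negConj (k : ℕ) (x : Fin n → ℝ) : (negConj T)^[k] x = -T^[k] (-x) := by
  have : Function.Semiconj Neg.neg (negConj T) T := fun x => by simp [negConj]
  rw [← this.iterate_right k x, neg_neg]

theorem negConj_indicator (Δ : Set (Fin n)) (t : ℝ) :
    negConj T (Δᶜ.indicator fun _ => t) = -T (Δᶜ.indicator fun _ => -t) := by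
  unfold negConj
  congr 2
  ext j
  by_cases hj : j ∈ Δᶜ <;> simp [hj]

theorem maxDominion_iff_minDominion_negConj {Δ : Set (Fin n)} :
    MaxDominion n T Δ ↔ MinDominion n (negConj T) Δ := by
  refine and_congr_right fun _ => ⟨fun ⟨α, hα⟩ => ⟨-α, fun i hi t ht => ?_⟩,
    fun ⟨β, hβ⟩ => ⟨-β, fun i hi t ht => ?_⟩⟩
  · rw [negConj_indicator, Pi.neg_apply, neg_le_neg_iff]
    exact hα i hi t ht
  · have := hβ i hi t ht
    rw [negConj_indicator, Pi.neg_apply] at this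
    linarith

theorem neg_mem_addSliceSpace_negConj {α β : ℝ} {x : Fin n → ℝ}
    (hx : x ∈ addSliceSpace n T α β) : -x ∈ addSliceSpace n (negConj T) (-β) (-α) := by
  intro i
  simp only [negConj, neg_neg, Pi.neg_apply]
  constructor <;> linarith [hx i]

theorem iterate_zero_le_of_forall_apply_indicator_le (hmono : Monotone T) (hhom : AddHomog n T)
    {Δ : Set (Fin n)} {β : ℝ}
    (hΔ : ∀ i ∈ Δ, ∀ t : ℝ, 0 ≤ t → T (Δᶜ.indicator fun _ => t) i ≤ β) (k : ℕ) {i : Fin n}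
    (hi : i ∈ Δ) : T^[k] 0 i ≤ k * β := by
  set m := max β ‖T 0‖
  have hm : ∀ j, T 0 j ≤ m := fun j =>
    (Real.le_norm_self _).trans ((norm_le_pi_norm (T 0) j).trans (le_max_right _ _))
  -- Outside `Δ` the orbit may grow at rate `m ≥ β`; inside it, the dominion caps the rate at `β`.
  have hbound : ∀ k : ℕ, ∀ j, T^[k] 0 j ≤ Δᶜ.indicator (fun _ => (k : ℝ) * (m - β)) j + k * β := by
    intro k
    induction k with
    | zero => intro j; simp
    | succ k ih =>
      intro j
      have hs : (0 : ℝ) ≤ k * (m - β) := mul_nonneg k.cast_nonneg (sub_nonneg.2 (le_max_left _ _))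
      have h₁ := hhom.apply_le_add hmono ih j
      rw [Function.iterate_succ_apply']
      by_cases hj : j ∈ Δ
      · rw [Set.indicator_of_notMem (Set.notMem_compl_iff.2 hj)]
        push_cast
        linarith [hΔ j hj _ hs]
      · have h₂ : T (Δᶜ.indicator fun _ => (k : ℝ) * (m - β)) j ≤ T 0 j + k * (m - β) :=
          hhom.apply_le_add hmono (fun l => Set.indicator_apply_le' (fun _ => by simp)
            fun _ => by simpa using hs) j
        rw [Set.indicator_of_mem hj]
        push_cast
        linarith [hm j]
  simpa [Set.indicator_of_notMem (Set.notMem_compl_iff.2 hi)] using hbound k i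

theorem le_iterate_zero_of_forall_le_apply_indicator (hmono : Monotone T) (hhom : AddHomog n T)
    {Δ : Set (Fin n)} {α : ℝ}
    (hΔ : ∀ i ∈ Δ, ∀ t : ℝ, 0 ≤ t → α ≤ T (Δᶜ.indicator fun _ => -t) i) (k : ℕ) {i : Fin n}
    (hi : i ∈ Δ) : k * α ≤ T^[k] 0 i := by
  have := iterate_zero_le_of_forall_apply_indicator_le hmono.negConj hhom.negConj (β := -α)
    (fun i hi t ht => by rw [negConj_indicator, Pi.neg_apply]; linarith [hΔ i hi t ht]) k hi
  rw [iterate_negConj, neg_zero, Pi.neg_apply] at this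
  linarith

theorem sub_le_hilbertSeminorm (x : Fin n → ℝ) (i j : Fin n) : x i - x j ≤ hilbertSeminorm n x :=
  sub_le_sub (le_ciSup (Set.finite_range x).bddAbove i) (ciInf_le (Set.finite_range x).bddBelow j)

theorem hilbertSeminorm_le_iff [Nonempty (Fin n)] {x : Fin n → ℝ} {C : ℝ} :
    hilbertSeminorm n x ≤ C ↔ ∀ i j, x i - x j ≤ C := by
  refine ⟨fun h i j => (sub_le_hilbertSeminorm x i j).trans h, fun h => ?_⟩
  rw [hilbertSeminorm, sub_le_iff_le_add, ciSup_le_iff (Set.finite_range x).bddAbove]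
  intro i
  rw [← sub_le_iff_le_add', le_ciInf_iff (Set.finite_range x).bddBelow]
  intro j
  linarith [h i j]

theorem exists_ultrafilter_mem_tendsto_atTop {X : Type*} {f : X → ℝ} {s : Set X}
    (h : ¬ BddAbove (f '' s)) : ∃ F : Ultrafilter X, s ∈ F ∧ Tendsto f F atTop := by
  have : (comap f atTop ⊓ 𝓟 s).NeBot := by
    refine inf_principal_neBot_iff.2 fun U hU => ?_
    obtain ⟨t, ht, htU⟩ := mem_comap.1 hU
    obtain ⟨a, ha⟩ := mem_atTop_sets.1 ht
    obtain ⟨_, ⟨x, hx, rfl⟩, hax⟩ := not_bddAbove_iff.1 h a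
    exact ⟨x, htU (ha _ hax.le), hx⟩
  refine ⟨Ultrafilter.of (comap f atTop ⊓ 𝓟 s), ?_, ?_⟩
  · exact Ultrafilter.of_le _ (mem_inf_of_right (mem_principal_self s))
  · exact tendsto_comap.mono_left ((Ultrafilter.of_le _).trans inf_le_left)

def lowClass (F : Filter (Fin n → ℝ)) : Set (Fin n) :=
  {i | ∃ C, ∀ᶠ x in F, ∀ j, x i - x j ≤ C}

theorem lowClass_nonempty [Nonempty (Fin n)] (F : Ultrafilter (Fin n → ℝ)) :
    (lowClass (F : Filter (Fin n → ℝ))).Nonempty := by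
  obtain ⟨i, hi⟩ := Ultrafilter.eventually_exists_iff.1
    (Eventually.of_forall (f := (F : Filter (Fin n → ℝ))) fun x => Finite.exists_min x)
  exact ⟨i, 0, hi.mono fun x hx j => sub_nonpos.2 (hx j)⟩

theorem minDominion_lowClass [Nonempty (Fin n)] (hmono : Monotone T) (hhom : AddHomog n T)
    {α β : ℝ} (F : Ultrafilter (Fin n → ℝ)) (hF : ∀ᶠ x in F, x ∈ addSliceSpace n T α β) :
    MinDominion n T (lowClass (F : Filter (Fin n → ℝ))) := by
  set B := lowClass (F : Filter (Fin n → ℝ))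
  refine ⟨lowClass_nonempty F, ?_⟩
  have hC : ∀ i, ∃ C : ℝ, i ∈ B → ∀ᶠ x : Fin n → ℝ in F, ∀ j, x i - x j ≤ C := fun i => by
    by_cases hi : i ∈ B
    · obtain ⟨C, hC⟩ := hi
      exact ⟨C, fun _ => hC⟩
    · exact ⟨0, fun h => absurd h hi⟩
  choose C hC using hC
  obtain ⟨i₁, hi₁⟩ := Finite.exists_max C
  refine ⟨β + C i₁, fun i hi t ht => ?_⟩
  have hfar : ∀ᶠ x : Fin n → ℝ in F, ∀ j ∉ B, ∃ k, t < x j - x k := by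
    refine (Set.toFinite Bᶜ).eventually_all.2 fun j hj => ?_
    have : ¬ ∀ᶠ x : Fin n → ℝ in F, ∀ k, x j - x k ≤ t := fun h => hj ⟨t, h⟩
    exact (Ultrafilter.eventually_not.2 this).mono fun x hx => by
      simpa only [not_forall, not_le] using hx
  obtain ⟨x, hxS, hxi, hxfar⟩ := (hF.and ((hC i hi).and hfar)).exists
  have hle : ∀ j, (Bᶜ.indicator fun _ => t) j ≤ x j + (C i - x i) := fun j => by
    by_cases hj : j ∈ B
    · rw [Set.indicator_of_notMem (Set.notMem_compl_iff.2 hj)]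
      linarith [hxi j]
    · obtain ⟨k, hk⟩ := hxfar j hj
      rw [Set.indicator_of_mem hj]
      linarith [hxi k]
  linarith [hhom.apply_le_add hmono hle i, (hxS i).2, hi₁ i]

theorem mem_lowClass_map_neg {F : Filter (Fin n → ℝ)} {i : Fin n} :
    i ∈ lowClass (map Neg.neg F) ↔ ∃ C, ∀ᶠ x in F, ∀ j, x j - x i ≤ C := by
  simp only [lowClass, Set.mem_ofPred_eq, eventually_map, Pi.neg_apply, neg_sub_neg]

theorem disjoint_lowClass_map_neg [Nonempty (Fin n)] {F : Filter (Fin n → ℝ)} [F.NeBot]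
    (hF : Tendsto (hilbertSeminorm n) F atTop) :
    Disjoint (lowClass F) (lowClass (map Neg.neg F)) := by
  refine Set.disjoint_left.2 fun i ⟨C₁, h₁⟩ hi => ?_
  obtain ⟨C₂, h₂⟩ := mem_lowClass_map_neg.1 hi
  obtain ⟨x, hx₁, hx₂, hx⟩ := (h₁.and (h₂.and (hF.eventually_gt_atTop (C₁ + C₂)))).exists
  have : hilbertSeminorm n x ≤ C₁ + C₂ :=
    hilbertSeminorm_le_iff.2 fun j k => by linarith [hx₁ k, hx₂ j]
  linarith

theorem bddAbove_hilbertSeminorm_addSliceSpace [Nonempty (Fin n)] (hmono : Monotone T)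
    (hhom : AddHomog n T)
    (hno : ¬ ∃ I J : Set (Fin n), Disjoint I J ∧ MinDominion n T I ∧ MaxDominion n T J)
    (α β : ℝ) : BddAbove (hilbertSeminorm n '' addSliceSpace n T α β) := by
  by_contra hunb
  obtain ⟨F, hS, htop⟩ := exists_ultrafilter_mem_tendsto_atTop hunb
  have hS' : ∀ᶠ x in F.map Neg.neg, x ∈ addSliceSpace n (negConj T) (-β) (-α) := by
    rw [Ultrafilter.coe_map, eventually_map]
    exact Filter.mem_of_superset hS fun x hx => neg_mem_addSliceSpace_negConj hx
  refine hno ⟨_, _, disjoint_lowClass_map_neg htop, minDominion_lowClass hmono hhom F hS, ?_⟩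
  rw [maxDominion_iff_minDominion_negConj, ← Ultrafilter.coe_map]
  exact minDominion_lowClass hmono.negConj hhom.negConj _ hS'

theorem mem_addSliceSpace_of_dist_le [Nonempty (Fin n)] (hmono : Monotone T)
    (hhom : AddHomog n T) {y g : Fin n → ℝ} {c M : ℝ} (hg : dist g y ≤ c)
    (hM : hilbertSeminorm n (g - T y) ≤ M) :
    y ∈ addSliceSpace n T (-(2 * c + ‖T 0‖ + M)) (2 * c + ‖T 0‖ + M) := by
  obtain ⟨iM, hiM⟩ := Finite.exists_max y
  obtain ⟨im, him⟩ := Finite.exists_min y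
  have hTM : T y iM ≤ T 0 iM + y iM := hhom.apply_le_add hmono (by simpa using hiM) iM
  have hTm : T 0 im + y im ≤ T y im := by
    linarith [hhom.apply_le_add hmono (u := 0) (v := y) (c := -y im) (by simpa using him) im]
  have hg' : ∀ j, |g j - y j| ≤ c := fun j => (abs_sub_le_dist g y j).trans hg
  have hT0 : ∀ j, |T 0 j| ≤ ‖T 0‖ := norm_le_pi_norm (T 0)
  have hgT : ∀ i j, (g i - T y i) - (g j - T y j) ≤ M := fun i j =>
    (sub_le_hilbertSeminorm (g - T y) i j).trans hM
  intro i
  constructor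
  · linarith [abs_le.1 (hg' i), abs_le.1 (hg' im), abs_le.1 (hT0 im), hgT i im]
  · linarith [abs_le.1 (hg' i), abs_le.1 (hg' iM), abs_le.1 (hT0 iM), hgT iM i]

theorem tendsto_div_of_abs_sub_le {a b : ℕ → ℝ} {l C : ℝ}
    (ha : Tendsto (fun k => a k / k) atTop (𝓝 l)) (hab : ∀ k, |b k - a k| ≤ C) :
    Tendsto (fun k => b k / k) atTop (𝓝 l) := by
  have h : Tendsto (fun k => (b k - a k) / k) atTop (𝓝 0) := by
    refine squeeze_zero_norm (fun k => ?_) (tendsto_const_div_atTop_nhds_zero_nat C)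
    rw [Real.norm_eq_abs, abs_div, Nat.abs_cast]
    exact div_le_div_of_nonneg_right (hab k) k.cast_nonneg
  simpa [sub_div] using ha.add h

theorem exists_tendsto_iterate_div_of_hilbertSeminorm_orbit_le [Nonempty (Fin n)]
    {G : (Fin n → ℝ) → (Fin n → ℝ)} (hmono : Monotone G) (hhom : AddHomog n G) {R : ℝ}
    (hR : ∀ k, hilbertSeminorm n (G^[k] 0) ≤ R) :
    ∃ lam : ℝ, ∀ (x : Fin n → ℝ) (i : Fin n),
      Tendsto (fun k : ℕ => G^[k] x i / k) atTop (𝓝 lam) := by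
  have hpair : ∀ k i j, G^[k] 0 i - G^[k] 0 j ≤ R := fun k => hilbertSeminorm_le_iff.1 (hR k)
  obtain i₀ : Fin n := Classical.arbitrary _
  -- The spread bound makes `G^[l] 0 ≤ G^[l] 0 i₀ + R`, whence subadditivity.
  set v : ℕ → ℝ := fun k => G^[k] 0 i₀ + R
  have hsub : Subadditive v := fun k l => by
    have := (hhom.iterate k).apply_le_add (hmono.iterate k) (u := G^[l] 0) (v := 0)
      (c := G^[l] 0 i₀ + R) (fun j => by rw [Pi.zero_apply, zero_add]; linarith [hpair l j i₀]) i₀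
    simp only [v, Function.iterate_add_apply]
    linarith
  have hbdd : BddBelow (Set.range fun k => v k / k) := by
    refine ⟨-dist (G 0) 0, ?_⟩
    rintro _ ⟨k, rfl⟩
    have hk : |G^[k] 0 i₀| ≤ k * dist (G 0) 0 := by
      simpa using (abs_sub_le_dist _ 0 i₀).trans
        ((hhom.lipschitzWith_one hmono).dist_iterate_self_le 0 k)
    rcases k.eq_zero_or_pos with rfl | hk₀
    · simp
    · rw [le_div_iff₀ (by exact_mod_cast hk₀)]
      linarith [abs_le.1 hk, hpair 0 i₀ i₀]
  refine ⟨hsub.lim, fun x i => tendsto_div_of_abs_sub_le (hsub.tendsto_lim hbdd)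
    (C := dist x 0 + 2 * R) fun k => ?_⟩
  have hx := abs_le.1 ((hhom.iterate k).abs_apply_sub_le_dist (hmono.iterate k) x 0 i)
  rw [abs_le]
  constructor <;> linarith [hpair k i i₀, hpair k i₀ i]

theorem le_of_tendsto_div {a : ℕ → ℝ} {l β : ℝ} (ha : Tendsto (fun k => a k / k) atTop (𝓝 l))
    (h : ∀ k : ℕ, a k ≤ k * β) : l ≤ β :=
  le_of_tendsto ha <| (eventually_gt_atTop 0).mono fun k hk =>
    (div_le_iff₀ (Nat.cast_pos.2 hk)).2 (by linarith [h k])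

theorem ge_of_tendsto_div {a : ℕ → ℝ} {l α : ℝ} (ha : Tendsto (fun k => a k / k) atTop (𝓝 l))
    (h : ∀ k : ℕ, k * α ≤ a k) : α ≤ l :=
  ge_of_tendsto ha <| (eventually_gt_atTop 0).mono fun k hk =>
    (le_div_iff₀ (Nat.cast_pos.2 hk)).2 (by linarith [h k])

theorem exists_perturbation_not_exists_tendsto_iterate_div (hmono : Monotone T)
    (hhom : AddHomog n T) {I J : Set (Fin n)} (hIJ : Disjoint I J) (hI : MinDominion n T I)
    (hJ : MaxDominion n T J) :
    ∃ G : (Fin n → ℝ) → (Fin n → ℝ), Monotone G ∧ AddHomog n G ∧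
      (∃ M : ℝ, ∀ x, hilbertSeminorm n (G x - T x) ≤ M) ∧
      ¬ ∃ lam : ℝ, ∀ (x : Fin n → ℝ) (i : Fin n),
        Tendsto (fun k : ℕ => G^[k] x i / k) atTop (𝓝 lam) := by
  obtain ⟨⟨i, hi⟩, β, hβ⟩ := hI
  obtain ⟨⟨j, hj⟩, α, hα⟩ := hJ
  obtain ⟨d, hd⟩ := exists_gt ((β - α) / 2)
  set δ : Fin n → ℝ := J.indicator (fun _ => d) - I.indicator (fun _ => d)
  have hδI : ∀ i ∈ I, δ i = -d := fun i hi => by simp [δ, hi, Set.disjoint_left.1 hIJ hi]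
  have hδJ : ∀ j ∈ J, δ j = d := fun j hj => by simp [δ, hj, Set.disjoint_right.1 hIJ hj]
  refine ⟨fun x => T x + δ, hmono.add_const δ, hhom.add_const δ,
    ⟨hilbertSeminorm n δ, fun x => by simp⟩, fun ⟨lam, hlam⟩ => ?_⟩
  have hlamI : lam ≤ β - d := le_of_tendsto_div (hlam 0 i) fun k =>
    iterate_zero_le_of_forall_apply_indicator_le (hmono.add_const δ) (hhom.add_const δ)
      (fun i hi t ht => by simp only [Pi.add_apply, hδI i hi]; linarith [hβ i hi t ht]) k hi
  have hlamJ : α + d ≤ lam := ge_of_tendsto_div (hlam 0 j) fun k =>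
    le_iterate_zero_of_forall_le_apply_indicator (hmono.add_const δ) (hhom.add_const δ)
      (fun j hj t ht => by simp only [Pi.add_apply, hδJ j hj]; linarith [hα j hj t ht]) k hj
  linarith

theorem stmt6 (n : ℕ) (hn : 1 ≤ n)
    (T : (Fin n → ℝ) → (Fin n → ℝ))
    (hmono : Monotone T) (hhom : AddHomog n T) :
    (¬ ∃ I J : Set (Fin n),
        Disjoint I J ∧ MinDominion n T I ∧ MaxDominion n T J) ↔
    (∀ G : (Fin n → ℝ) → (Fin n → ℝ), Monotone G → AddHomog n G →
        (∃ M : ℝ, ∀ x : Fin n → ℝ, hilbertSeminorm n (G x - T x) ≤ M) →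
        ∃ lam : ℝ, ∀ (x : Fin n → ℝ) (i : Fin n),
          Filter.Tendsto (fun k : ℕ => (G^[k] x) i / k) Filter.atTop (nhds lam)) := by
  have : Nonempty (Fin n) := ⟨⟨0, hn⟩⟩
  constructor
  · rintro hno G hGmono hGhom ⟨M, hM⟩
    have horbit : ∀ k, G^[k] 0 ∈ addSliceSpace n T _ _ := fun k =>
      mem_addSliceSpace_of_dist_le hmono hhom (g := G (G^[k] 0)) (c := dist (G 0) 0)
        (by simpa [dist_comm, ← Function.iterate_succ_apply'] using
          (hGhom.lipschitzWith_one hGmono).dist_iterate_succ_le_geometric 0 k) (hM _)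
    obtain ⟨R, hR⟩ := bddAbove_hilbertSeminorm_addSliceSpace hmono hhom hno _ _
    exact exists_tendsto_iterate_div_of_hilbertSeminorm_orbit_le hGmono hGhom
      fun k => hR ⟨_, horbit k, rfl⟩
  · rintro hG ⟨I, J, hIJ, hI, hJ⟩
    obtain ⟨G, hGmono, hGhom, hGT, hG'⟩ :=
      exists_perturbation_not_exists_tendsto_iterate_div hmono hhom hIJ hI hJ
    exact hG' (hG G hGmono hGhom hGT)
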